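/- arXiv:1712.00928 — 5 statements merged into one kernel-verified Lean document; each statement's English description precedes it below -/
import Mathlib

section
/- Fix z ∈ ℂ and let (θ(z,·), θ^{[1]}(z,·)) and (φ(z,·), φ^{[1]}(z,·)) be the integrated solutions with the standard initial values. Suppose η, η¹ : [a,b] → ℂ satisfy, for all x ∈ [a,b], η(x) = ∫_a^x η¹(t)/p(t) dt and η¹(x) = ∫_a^x [(q(t) − z r(t)) η(t) − r(t) θ(z,t)] dt (i.e., η plays the role of the z-derivative θ̇(z,·) of θ, solving the z-differentiated equation with zero initial data at a). Then for all x ∈ [a,b]: η(x) = θ(z,x) ∫_a^x r(t) φ(z,t) θ(z,t) dt − φ(z,x) ∫_a^x r(t) θ(z,t)² dt, and η¹(x) = θ^{[1]}(z,x) ∫_a^x r(t) φ(z,t) θ(z,t) dt − φ^{[1]}(z,x) ∫_a^x r(t) θ(z,t)² dt. -/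
open MeasureTheory intervalIntegral Set

/-- Hypothesis 3.1: `r > 0` a.e. with `r ∈ L¹((a,b))`, `p > 0` a.e. with `1/p ∈ L¹((a,b))`,
and `q ∈ L¹((a,b))` (all real-valued). -/
def Hyp31 (a b : ℝ) (p q r : ℝ → ℝ) : Prop :=
  (∀ᵐ x ∂(volume.restrict (Ioo a b)), 0 < r x) ∧
  IntegrableOn r (Ioo a b) ∧
  (∀ᵐ x ∂(volume.restrict (Ioo a b)), 0 < p x) ∧
  IntegrableOn (fun x => 1 / p x) (Ioo a b) ∧
  IntegrableOn q (Ioo a b)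

/-- `(u, u1)` is an integrated solution of `-(p u')' + q u = z r u` on `[a,b]`
with initial values `u(a) = ua`, `u^[1](a) = u1a`. -/
def IsIntegratedSol (a b : ℝ) (p q r : ℝ → ℝ) (z : ℂ) (u u1 : ℝ → ℂ)
    (ua u1a : ℂ) : Prop :=
  IntervalIntegrable (fun t => u1 t / (p t : ℂ)) volume a b ∧
  IntervalIntegrable (fun t => ((q t : ℂ) - z * (r t : ℂ)) * u t) volume a b ∧
  (∀ x ∈ Icc a b, u x = ua + ∫ t in a..x, u1 t / (p t : ℂ)) ∧
  (∀ x ∈ Icc a b, u1 x = u1a + ∫ t in a..x, ((q t : ℂ) - z * (r t : ℂ)) * u t)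

/-!
The Wronskian `θ φ^[1] - θ^[1] φ` of the standard fundamental system is identically `1`, so
variation of constants turns `(θ, φ)` into a solution of the inhomogeneous system with forcing
`-r θ` and zero data at `a`; this is exactly the right-hand side of the claim. Its difference with
`(η, η^[1])` solves the homogeneous system with zero data, and Picard iteration of the resulting
integral inequality (a Gronwall argument with an `L¹` kernel) shows that it vanishes.

Since the solutions are merely absolutely continuous, the product rule behind both steps comes
from Fubini's theorem on a triangle rather than from pointwise derivatives.
-/

theorem uIcc_subset_Icc_of_mem_Icc {a b x : ℝ} (hx : x ∈ Icc a b) : uIcc a x ⊆ Icc a b := by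
  rw [uIcc_of_le hx.1]
  exact Icc_subset_Icc_right hx.2

theorem IntervalIntegrable.mono_of_mem_Icc {E : Type*} [NormedAddCommGroup E] {a b x : ℝ}
    {f : ℝ → E} (hf : IntervalIntegrable f volume a b) (hx : x ∈ Icc a b) :
    IntervalIntegrable f volume a x :=
  hf.mono_set (uIcc_subset_uIcc_left (Icc_subset_uIcc hx))

section Primitive

variable {𝕜 : Type*} [RCLike 𝕜] {a b x : ℝ} {f g : ℝ → 𝕜}

theorem integral_mul_primitive_eq_integral_primitive_mul (hax : a ≤ x)
    (hf : IntervalIntegrable f volume a x) (hg : IntervalIntegrable g volume a x) :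
    ∫ t in a..x, f t * ∫ s in a..t, g s = ∫ s in a..x, (∫ t in s..x, f t) * g s := by
  rw [intervalIntegrable_iff_integrableOn_Ioc_of_le hax] at hf hg
  set μ := volume.restrict (Ioc a x)
  set F : ℝ × ℝ → 𝕜 := {p | p.2 ≤ p.1}.indicator fun p => f p.1 * g p.2
  have hF : Integrable F (μ.prod μ) :=
    (hf.mul_prod hg).indicator (measurableSet_le measurable_snd measurable_fst)
  rw [integral_of_le hax, integral_of_le hax]
  convert integral_integral_swap (f := fun t s => F (t, s)) hF using 1
  · refine setIntegral_congr_fun measurableSet_Ioc fun t ht => ?_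
    have : (fun s => F (t, s)) = (Iic t).indicator fun s => f t * g s := by
      ext s; simp [F, indicator_apply]
    rw [this, MeasureTheory.integral_indicator measurableSet_Iic,
      Measure.restrict_restrict measurableSet_Iic, Iic_inter_Ioc_of_le ht.2, MeasureTheory.integral_const_mul, integral_of_le ht.1.le]
  · refine setIntegral_congr_fun measurableSet_Ioc fun s hs => ?_
    have : (fun t => F (t, s)) = (Ici s).indicator fun t => f t * g s := by
      ext t; simp [F, indicator_apply]
    have hIcc : Ici s ∩ Ioc a x = Icc s x := by
      ext t; simp only [mem_inter_iff, mem_Ici, mem_Ioc, mem_Icc]; grind [hs.1]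
    rw [this, MeasureTheory.integral_indicator measurableSet_Ici,
      Measure.restrict_restrict measurableSet_Ici, hIcc, MeasureTheory.integral_mul_const, integral_of_le hs.2, integral_Icc_eq_integral_Ioc]

theorem integral_mul_primitive_add_primitive_mul (hax : a ≤ x)
    (hf : IntervalIntegrable f volume a x) (hg : IntervalIntegrable g volume a x) :
    ∫ t in a..x, (f t * (∫ s in a..t, g s) + (∫ s in a..t, f s) * g t)
      = (∫ t in a..x, f t) * ∫ t in a..x, g t := by
  have hF := continuousOn_primitive_interval' hf left_mem_uIcc
  have hG := continuousOn_primitive_interval' hg left_mem_uIcc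
  have hsplit : ∫ s in a..x, (∫ t in s..x, f t) * g s
      = ∫ s in a..x, ((∫ t in a..x, f t) * g s - (∫ t in a..s, f t) * g s) :=
    integral_congr fun s hs => by
      rw [← integral_interval_sub_left hf (hf.mono_set (uIcc_subset_uIcc_left hs)), sub_mul]
  rw [integral_add (hf.mul_continuousOn hG) (hg.continuousOn_mul hF),
    integral_mul_primitive_eq_integral_primitive_mul hax hf hg, hsplit,
    integral_sub (hg.const_mul _) (hg.continuousOn_mul hF), intervalIntegral.integral_const_mul,
    sub_add_cancel]

def IsPrimitiveOn (u f : ℝ → 𝕜) (a b : ℝ) : Prop :=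
  IntervalIntegrable f volume a b ∧ ∀ x ∈ Icc a b, u x = u a + ∫ t in a..x, f t

namespace IsPrimitiveOn

variable {u v : ℝ → 𝕜}

theorem continuousOn (hu : IsPrimitiveOn u f a b) : ContinuousOn u (Icc a b) :=
  (continuousOn_const.add (continuousOn_primitive_interval' hu.1 left_mem_uIcc)).mono
    Icc_subset_uIcc |>.congr fun x hx => hu.2 x hx

theorem sub (hu : IsPrimitiveOn u f a b) (hv : IsPrimitiveOn v g a b) :
    IsPrimitiveOn (fun x => u x - v x) (fun t => f t - g t) a b := by
  refine ⟨hu.1.sub hv.1, fun x hx => ?_⟩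
  dsimp only
  rw [hu.2 x hx, hv.2 x hx, integral_sub (hu.1.mono_of_mem_Icc hx) (hv.1.mono_of_mem_Icc hx)]
  ring

theorem congr (hu : IsPrimitiveOn u f a b) (hab : a ≤ b) (hfg : EqOn f g (Icc a b)) :
    IsPrimitiveOn u g a b := by
  refine ⟨hu.1.congr (hfg.mono ?_), fun x hx => ?_⟩
  · rw [uIoc_of_le hab]
    exact Ioc_subset_Icc_self
  · rw [hu.2 x hx, integral_congr (hfg.mono (uIcc_subset_Icc_of_mem_Icc hx))]

theorem mul (hu : IsPrimitiveOn u f a b) (hv : IsPrimitiveOn v g a b) (hab : a ≤ b) :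
    IsPrimitiveOn (fun x => u x * v x) (fun t => f t * v t + u t * g t) a b := by
  have hu_cont := uIcc_of_le hab ▸ hu.continuousOn
  have hv_cont := uIcc_of_le hab ▸ hv.continuousOn
  refine ⟨(hu.1.mul_continuousOn hv_cont).add (hv.1.continuousOn_mul hu_cont), fun x hx => ?_⟩
  have hf := hu.1.mono_of_mem_Icc hx
  have hg := hv.1.mono_of_mem_Icc hx
  have hF := continuousOn_primitive_interval' hf left_mem_uIcc
  have hG := continuousOn_primitive_interval' hg left_mem_uIcc
  have hexpand : ∫ t in a..x, (f t * v t + u t * g t)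
      = ∫ t in a..x, ((v a * f t + u a * g t)
          + (f t * (∫ s in a..t, g s) + (∫ s in a..t, f s) * g t)) :=
    integral_congr fun t ht => by
      have ht' := uIcc_subset_Icc_of_mem_Icc hx ht
      rw [hu.2 t ht', hv.2 t ht']
      ring
  dsimp only
  rw [hexpand, integral_add ((hf.const_mul _).add (hg.const_mul _))
      ((hf.mul_continuousOn hG).add (hg.continuousOn_mul hF)),
    integral_add (hf.const_mul _) (hg.const_mul _), intervalIntegral.integral_const_mul,
    intervalIntegral.integral_const_mul, integral_mul_primitive_add_primitive_mul hx.1 hf hg,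
    hu.2 x hx, hv.2 x hx]
  ring

theorem pow (hu : IsPrimitiveOn u f a b) (hab : a ≤ b) (n : ℕ) :
    IsPrimitiveOn (fun x => u x ^ (n + 1)) (fun t => (n + 1) * u t ^ n * f t) a b := by
  induction n with
  | zero => simpa using hu
  | succ n ih =>
    have hpow : (fun x => u x ^ (n + 1 + 1)) = fun x => u x * u x ^ (n + 1) := by
      ext x; ring
    rw [hpow]
    refine (hu.mul ih hab).congr hab fun t _ => ?_
    push_cast
    ring

end IsPrimitiveOn

theorem isPrimitiveOn_integral (hf : IntervalIntegrable f volume a b) :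
    IsPrimitiveOn (fun x => ∫ t in a..x, f t) f a b :=
  ⟨hf, fun x _ => by dsimp only; rw [integral_same, zero_add]⟩

end Primitive

theorem integral_mul_primitive_pow {a b x : ℝ} {g : ℝ → ℝ} (hab : a ≤ b)
    (hg : IntervalIntegrable g volume a b) (hx : x ∈ Icc a b) (n : ℕ) :
    ∫ t in a..x, g t * (∫ s in a..t, g s) ^ n = (∫ t in a..x, g t) ^ (n + 1) / (n + 1) := by
  have h := ((isPrimitiveOn_integral hg).pow hab n).2 x hx
  dsimp only at h
  rw [integral_same, zero_pow n.succ_ne_zero, zero_add] at h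
  rw [h, ← intervalIntegral.integral_div]
  exact integral_congr fun t _ => by field_simp

theorem le_zero_of_le_integral_mul {a b : ℝ} {g M : ℝ → ℝ} (hab : a ≤ b)
    (hg : IntervalIntegrable g volume a b) (hg_nonneg : 0 ≤ g) (hM : ContinuousOn M (Icc a b))
    (hle : ∀ x ∈ Icc a b, M x ≤ ∫ t in a..x, g t * M t) : ∀ x ∈ Icc a b, M x ≤ 0 := by
  obtain ⟨C, hC⟩ := isCompact_Icc.exists_bound_of_continuousOn hM
  have hG := continuousOn_primitive_interval' hg left_mem_uIcc
  have bound : ∀ n : ℕ, ∀ x ∈ Icc a b,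
      M x ≤ C * (∫ t in a..x, g t) ^ n / n.factorial := by
    intro n
    induction n with
    | zero => exact fun x hx => by simpa using (le_abs_self _).trans (hC x hx)
    | succ n ih =>
      intro x hx
      have hsub := uIcc_subset_Icc_of_mem_Icc hx
      calc M x ≤ ∫ t in a..x, g t * M t := hle x hx
        _ ≤ ∫ t in a..x, g t * (C * (∫ s in a..t, g s) ^ n / n.factorial) :=
          integral_mono_on hx.1 ((hg.mono_of_mem_Icc hx).mul_continuousOn (hM.mono hsub))
            ((hg.mono_of_mem_Icc hx).mul_continuousOn
              ((continuousOn_const.mul (hG.pow n)).div_const _ |>.mono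
                (hsub.trans Icc_subset_uIcc)))
            fun t ht => mul_le_mul_of_nonneg_left (ih t (hsub (Icc_subset_uIcc ht)))
              (hg_nonneg t)
        _ = C / n.factorial * ∫ t in a..x, g t * (∫ s in a..t, g s) ^ n := by
          rw [← intervalIntegral.integral_const_mul]
          exact integral_congr fun t _ => by ring
        _ = C * (∫ t in a..x, g t) ^ (n + 1) / (n + 1).factorial := by
          rw [integral_mul_primitive_pow hab hg hx, Nat.factorial_succ]
          push_cast
          field_simp
  intro x hx
  have hlim := (FloorSemiring.tendsto_pow_div_factorial_atTop (∫ t in a..x, g t)).const_mul C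
  rw [mul_zero] at hlim
  exact ge_of_tendsto' hlim fun n => (bound n x hx).trans_eq (mul_div_assoc _ _ _)

theorem IsPrimitiveOn.eq_zero_of_linear_system {𝕜 : Type*} [RCLike 𝕜] {a b : ℝ}
    {k₁ k₂ w w₁ : ℝ → 𝕜} (hab : a ≤ b) (hk₁ : IntervalIntegrable k₁ volume a b)
    (hk₂ : IntervalIntegrable k₂ volume a b)
    (hw : IsPrimitiveOn w (fun t => k₁ t * w₁ t) a b)
    (hw₁ : IsPrimitiveOn w₁ (fun t => k₂ t * w t) a b) (hwa : w a = 0) (hw₁a : w₁ a = 0) :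
    ∀ x ∈ Icc a b, w x = 0 ∧ w₁ x = 0 := by
  have hM : ContinuousOn (fun t => ‖w t‖ + ‖w₁ t‖) (Icc a b) :=
    hw.continuousOn.norm.add hw₁.continuousOn.norm
  have hle : ∀ x ∈ Icc a b, ‖w x‖ + ‖w₁ x‖
      ≤ ∫ t in a..x, (‖k₁ t‖ + ‖k₂ t‖) * (‖w t‖ + ‖w₁ t‖) := by
    intro x hx
    have hi₁ := hw.1.mono_of_mem_Icc hx
    have hi₂ := hw₁.1.mono_of_mem_Icc hx
    rw [hw.2 x hx, hw₁.2 x hx, hwa, hw₁a, zero_add, zero_add]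
    calc ‖∫ t in a..x, k₁ t * w₁ t‖ + ‖∫ t in a..x, k₂ t * w t‖
        ≤ (∫ t in a..x, ‖k₁ t * w₁ t‖) + ∫ t in a..x, ‖k₂ t * w t‖ :=
          add_le_add (norm_integral_le_integral_norm hx.1) (norm_integral_le_integral_norm hx.1)
      _ = ∫ t in a..x, (‖k₁ t * w₁ t‖ + ‖k₂ t * w t‖) := (integral_add hi₁.norm hi₂.norm).symm
      _ ≤ ∫ t in a..x, (‖k₁ t‖ + ‖k₂ t‖) * (‖w t‖ + ‖w₁ t‖) :=
          integral_mono_on hx.1 (hi₁.norm.add hi₂.norm)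
            (((hk₁.norm.add hk₂.norm).mono_of_mem_Icc hx).mul_continuousOn
              (hM.mono (uIcc_subset_Icc_of_mem_Icc hx)))
            fun t _ => by
              simp only [norm_mul]
              nlinarith [norm_nonneg (k₁ t), norm_nonneg (k₂ t), norm_nonneg (w t),
                norm_nonneg (w₁ t)]
  intro x hx
  have h := le_zero_of_le_integral_mul hab (hk₁.norm.add hk₂.norm)
    (fun t => add_nonneg (norm_nonneg _) (norm_nonneg _)) hM hle x hx
  exact ⟨norm_le_zero_iff.1 (by linarith [norm_nonneg (w₁ x)]),
    norm_le_zero_iff.1 (by linarith [norm_nonneg (w x)])⟩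

theorem MeasureTheory.IntegrableOn.intervalIntegrable_ofReal {a b : ℝ} {f : ℝ → ℝ}
    (hf : IntegrableOn f (Ioo a b)) (hab : a ≤ b) :
    IntervalIntegrable (fun t => (f t : ℂ)) volume a b :=
  (intervalIntegrable_iff_integrableOn_Ioo_of_le hab).2 hf.ofReal

theorem Hyp31.intervalIntegrable_coefficients {a b : ℝ} {p q r : ℝ → ℝ}
    (hpqr : Hyp31 a b p q r) (hab : a ≤ b) (z : ℂ) :
    IntervalIntegrable (fun t => (r t : ℂ)) volume a b ∧
      IntervalIntegrable (fun t => (p t : ℂ)⁻¹) volume a b ∧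
      IntervalIntegrable (fun t => (q t : ℂ) - z * r t) volume a b := by
  obtain ⟨-, hr, -, hp, hq⟩ := hpqr
  have hR := hr.intervalIntegrable_ofReal hab
  exact ⟨hR, by simpa using hp.intervalIntegrable_ofReal hab,
    (hq.intervalIntegrable_ofReal hab).sub (hR.const_mul z)⟩

namespace IsIntegratedSol

variable {a b : ℝ} {p q r : ℝ → ℝ} {z : ℂ} {u u1 v v1 : ℝ → ℂ} {ua u1a va v1a : ℂ}

theorem initial_values (hu : IsIntegratedSol a b p q r z u u1 ua u1a) (hab : a ≤ b) :
    u a = ua ∧ u1 a = u1a := by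
  have ha := left_mem_Icc.2 hab
  rw [hu.2.2.1 a ha, hu.2.2.2 a ha, integral_same, integral_same, add_zero, add_zero]
  exact ⟨rfl, rfl⟩

theorem isPrimitiveOn (hu : IsIntegratedSol a b p q r z u u1 ua u1a) (hab : a ≤ b) :
    IsPrimitiveOn u (fun t => u1 t / p t) a b ∧
      IsPrimitiveOn u1 (fun t => (q t - z * r t) * u t) a b := by
  obtain ⟨hua, hu1a⟩ := hu.initial_values hab
  exact ⟨⟨hu.1, hua ▸ hu.2.2.1⟩, ⟨hu.2.1, hu1a ▸ hu.2.2.2⟩⟩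

theorem wronskian_eq (hu : IsIntegratedSol a b p q r z u u1 ua u1a)
    (hv : IsIntegratedSol a b p q r z v v1 va v1a) (hab : a ≤ b) :
    ∀ x ∈ Icc a b, u x * v1 x - u1 x * v x = ua * v1a - u1a * va := by
  obtain ⟨hu₀, hu₁⟩ := hu.isPrimitiveOn hab
  obtain ⟨hv₀, hv₁⟩ := hv.isPrimitiveOn hab
  have hW : IsPrimitiveOn (fun x => u x * v1 x - u1 x * v x) (fun _ => 0) a b :=
    ((hu₀.mul hv₁ hab).sub (hu₁.mul hv₀ hab)).congr hab fun t _ => by ring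
  obtain ⟨hua, hu1a⟩ := hu.initial_values hab
  obtain ⟨hva, hv1a⟩ := hv.initial_values hab
  intro x hx
  simpa [hua, hu1a, hva, hv1a] using hW.2 x hx

variable {θ θ1 φ φ1 h : ℝ → ℂ}

theorem variation_of_constants (hθ : IsIntegratedSol a b p q r z θ θ1 1 0)
    (hφ : IsIntegratedSol a b p q r z φ φ1 0 1) (hab : a ≤ b)
    (hh : IntervalIntegrable h volume a b) :
    IsPrimitiveOn (fun x => φ x * (∫ t in a..x, θ t * h t) - θ x * ∫ t in a..x, φ t * h t)
        (fun t => (φ1 t * (∫ s in a..t, θ s * h s) - θ1 t * ∫ s in a..t, φ s * h s) / p t) a b ∧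
      IsPrimitiveOn (fun x => φ1 x * (∫ t in a..x, θ t * h t) - θ1 x * ∫ t in a..x, φ t * h t)
        (fun t => (q t - z * r t) * (φ t * (∫ s in a..t, θ s * h s)
          - θ t * ∫ s in a..t, φ s * h s) + h t) a b := by
  obtain ⟨hθ₀, hθ₁⟩ := hθ.isPrimitiveOn hab
  obtain ⟨hφ₀, hφ₁⟩ := hφ.isPrimitiveOn hab
  have hA := isPrimitiveOn_integral (hh.continuousOn_mul (uIcc_of_le hab ▸ hθ₀.continuousOn))
  have hB := isPrimitiveOn_integral (hh.continuousOn_mul (uIcc_of_le hab ▸ hφ₀.continuousOn))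
  have hW := hθ.wronskian_eq hφ hab
  refine ⟨((hφ₀.mul hA hab).sub (hθ₀.mul hB hab)).congr hab fun t _ => by ring,
    ((hφ₁.mul hA hab).sub (hθ₁.mul hB hab)).congr hab fun t ht => ?_⟩
  linear_combination h t * hW t ht

end IsIntegratedSol

theorem statement0 (a b : ℝ) (hab : a < b) (p q r : ℝ → ℝ)
    (hpqr : Hyp31 a b p q r) (z : ℂ)
    (θ θ1 φ φ1 η η1 : ℝ → ℂ)
    (hθ : IsIntegratedSol a b p q r z θ θ1 1 0)
    (hφ : IsIntegratedSol a b p q r z φ φ1 0 1)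
    (hηi : IntervalIntegrable (fun t => η1 t / (p t : ℂ)) volume a b)
    (hη1i : IntervalIntegrable
      (fun t => ((q t : ℂ) - z * (r t : ℂ)) * η t - (r t : ℂ) * θ t) volume a b)
    (hη : ∀ x ∈ Icc a b, η x = ∫ t in a..x, η1 t / (p t : ℂ))
    (hη1 : ∀ x ∈ Icc a b,
      η1 x = ∫ t in a..x, (((q t : ℂ) - z * (r t : ℂ)) * η t - (r t : ℂ) * θ t)) :
    ∀ x ∈ Icc a b,
      η x = θ x * (∫ t in a..x, (r t : ℂ) * φ t * θ t)
              - φ x * (∫ t in a..x, (r t : ℂ) * θ t ^ 2) ∧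
      η1 x = θ1 x * (∫ t in a..x, (r t : ℂ) * φ t * θ t)
              - φ1 x * (∫ t in a..x, (r t : ℂ) * θ t ^ 2) := by
  obtain ⟨hR, hP, hQ⟩ := hpqr.intervalIntegrable_coefficients hab.le z
  have hθc := uIcc_of_le hab.le ▸ ((hθ.isPrimitiveOn hab.le).1.continuousOn)
  obtain ⟨hξ, hξ1⟩ := hθ.variation_of_constants hφ hab.le
    (h := fun t => -(r t * θ t)) (hR.mul_continuousOn hθc).neg
  have ha := left_mem_Icc.2 hab.le
  have hηp : IsPrimitiveOn η (fun t => η1 t / p t) a b :=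
    ⟨hηi, fun x hx => by rw [hη x hx, hη a ha, integral_same, zero_add]⟩
  have hη1p : IsPrimitiveOn η1 (fun t => (q t - z * r t) * η t - r t * θ t) a b :=
    ⟨hη1i, fun x hx => by rw [hη1 x hx, hη1 a ha, integral_same, zero_add]⟩
  have hzero := IsPrimitiveOn.eq_zero_of_linear_system hab.le hP hQ
    ((hηp.sub hξ).congr hab.le fun t _ => by ring)
    ((hη1p.sub hξ1).congr hab.le fun t _ => by ring)
    (by simp [hη a ha]) (by simp [hη1 a ha])
  intro x hx
  have hA : ∫ t in a..x, θ t * -(r t * θ t) = -∫ t in a..x, (r t : ℂ) * θ t ^ 2 := by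
    rw [← intervalIntegral.integral_neg]
    exact integral_congr fun t _ => by ring
  have hB : ∫ t in a..x, φ t * -(r t * θ t) = -∫ t in a..x, (r t : ℂ) * φ t * θ t := by
    rw [← intervalIntegral.integral_neg]
    exact integral_congr fun t _ => by ring
  obtain ⟨h₀, h₁⟩ := hzero x hx
  rw [hA, hB] at h₀ h₁
  exact ⟨by linear_combination h₀, by linear_combination h₁⟩
end

section
/- Fix λ ∈ ℝ and suppose the integrated solutions θ(λ,·) and φ(λ,·) with the standard initial values are real-valued on [a,b]. Then for every x ∈ (a,b], the strict Cauchy inequality (∫_a^x r(t) φ(λ,t) θ(λ,t) dt)² < (∫_a^x r(t) θ(λ,t)² dt)(∫_a^x r(t) φ(λ,t)² dt) holds; in particular, with the variation-of-parameters z-derivatives θ̇, φ̇ (defined from A, B, C as in eq. (14.3.39)), one has W(φ̇(λ,·), θ̇(λ,·))(x) = A(x)² − B(x)C(x) < 0 for x ∈ (a,b]. -/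
open MeasureTheory intervalIntegral Set

/-- `(u, u1)` is a real-valued integrated solution of `-(p u')' + q u = λ r u` on `[a,b]`
with initial values `u(a) = ua`, `u^[1](a) = u1a` (real spectral parameter `lam`). -/
def IsIntegratedSolR (a b : ℝ) (p q r : ℝ → ℝ) (lam : ℝ) (u u1 : ℝ → ℝ)
    (ua u1a : ℝ) : Prop :=
  IntervalIntegrable (fun t => u1 t / p t) volume a b ∧
  IntervalIntegrable (fun t => (q t - lam * r t) * u t) volume a b ∧
  (∀ x ∈ Icc a b, u x = ua + ∫ t in a..x, u1 t / p t) ∧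
  (∀ x ∈ Icc a b, u1 x = u1a + ∫ t in a..x, (q t - lam * r t) * u t)

/-!
The Wronskian `θ φ^[1] - φ θ^[1]` of two integrated solutions is absolutely continuous with
derivative zero a.e., so it keeps its initial value `1`; expanding `W(φ̇, θ̇)` then gives
`(A² - B C) · 1`. The inequality `A² < B C` is Cauchy–Schwarz in `L²(r dt)` on `(a, x]`, and it is
strict because `θ` and `φ` are independent there: a solution vanishing a.e. on `(a, x]` vanishes on
`[a, x]` by continuity, so its quasi-derivative is the constant `u^[1](a)` and
`0 = u(x) - u(a) = u^[1](a) ∫ₐˣ 1/p` with `p > 0` forces `u^[1](a) = 0`.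
-/

section WeightedCauchySchwarz

variable {α : Type*} [MeasurableSpace α] {μ : Measure α} {w f g : α → ℝ}

lemma integral_mul_sq_pos (hw : ∀ᵐ t ∂μ, 0 < w t) (hi : Integrable (fun t => w t * f t ^ 2) μ)
    (hf : ¬ f =ᵐ[μ] 0) : 0 < ∫ t, w t * f t ^ 2 ∂μ := by
  have hnn : 0 ≤ᵐ[μ] fun t => w t * f t ^ 2 := by
    filter_upwards [hw] with t ht using by positivity
  refine (integral_nonneg_of_ae hnn).lt_of_ne fun h => hf ?_
  filter_upwards [hw, (integral_eq_zero_iff_of_nonneg_ae hnn hi).mp h.symm] with t ht h0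
  simpa [ht.ne'] using h0

lemma integral_mul_linear_combination_sq (hff : Integrable (fun t => w t * f t ^ 2) μ)
    (hfg : Integrable (fun t => w t * f t * g t) μ) (hgg : Integrable (fun t => w t * g t ^ 2) μ)
    (c d : ℝ) :
    Integrable (fun t => w t * (c * f t + d * g t) ^ 2) μ ∧
      ∫ t, w t * (c * f t + d * g t) ^ 2 ∂μ =
        c ^ 2 * (∫ t, w t * f t ^ 2 ∂μ) + 2 * c * d * (∫ t, w t * f t * g t ∂μ) +
          d ^ 2 * ∫ t, w t * g t ^ 2 ∂μ := by
  have hexpand : (fun t => w t * (c * f t + d * g t) ^ 2) = fun t =>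
      c ^ 2 * (w t * f t ^ 2) + 2 * c * d * (w t * f t * g t) + d ^ 2 * (w t * g t ^ 2) :=
    funext fun t => by ring
  have h1 : Integrable (fun t => c ^ 2 * (w t * f t ^ 2) + 2 * c * d * (w t * f t * g t)) μ :=
    (hff.const_mul _).add (hfg.const_mul _)
  have h2 := hgg.const_mul (d ^ 2)
  rw [hexpand]
  refine ⟨h1.add h2, ?_⟩
  rw [integral_add h1 h2, integral_add (hff.const_mul _) (hfg.const_mul _),
    MeasureTheory.integral_const_mul, MeasureTheory.integral_const_mul,
    MeasureTheory.integral_const_mul]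

theorem sq_integral_mul_lt_of_linearIndependent (hw : ∀ᵐ t ∂μ, 0 < w t)
    (hff : Integrable (fun t => w t * f t ^ 2) μ) (hfg : Integrable (fun t => w t * f t * g t) μ)
    (hgg : Integrable (fun t => w t * g t ^ 2) μ)
    (hind : ∀ c d : ℝ, (∀ᵐ t ∂μ, c * f t + d * g t = 0) → c = 0 ∧ d = 0) :
    (∫ t, w t * f t * g t ∂μ) ^ 2 < (∫ t, w t * f t ^ 2 ∂μ) * ∫ t, w t * g t ^ 2 ∂μ := by
  set A := ∫ t, w t * f t * g t ∂μ
  set B := ∫ t, w t * f t ^ 2 ∂μ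
  set C := ∫ t, w t * g t ^ 2 ∂μ
  have hquad : ∀ c d : ℝ, d ≠ 0 ∨ c ≠ 0 → 0 < c ^ 2 * B + 2 * c * d * A + d ^ 2 * C := by
    intro c d hcd
    obtain ⟨hint, heq⟩ := integral_mul_linear_combination_sq hff hfg hgg c d
    rw [← heq]
    refine integral_mul_sq_pos hw hint fun h => ?_
    obtain ⟨rfl, rfl⟩ := hind c d h
    simp at hcd
  have hB : 0 < B := by simpa using hquad 1 0 (by norm_num)
  -- the quadratic form at `(A, -B)` equals `B * (B * C - A ^ 2)`
  have hprod : 0 < B * (B * C - A ^ 2) := by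
    linear_combination hquad A (-B) (Or.inl (neg_ne_zero.mpr hB.ne'))
  nlinarith [(mul_pos_iff_of_pos_left hB).mp hprod]

end WeightedCauchySchwarz

lemma absolutelyContinuousOnInterval_const_add_integral {a b : ℝ} {f : ℝ → ℝ}
    (hf : IntervalIntegrable f volume a b) (c : ℝ) :
    AbsolutelyContinuousOnInterval (fun s => c + ∫ t in a..s, f t) a b :=
  (LipschitzWith.const c).lipschitzOnWith.absolutelyContinuousOnInterval.fun_add
    (hf.absolutelyContinuousOnInterval_intervalIntegral left_mem_uIcc)

namespace IsIntegratedSolR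

variable {a b : ℝ} {p q r : ℝ → ℝ} {lam : ℝ} {u u1 v v1 : ℝ → ℝ} {ua u1a va v1a : ℝ}

lemma continuousOn (hu : IsIntegratedSolR a b p q r lam u u1 ua u1a) :
    ContinuousOn u (Icc a b) :=
  ((continuousOn_const.add (continuousOn_primitive_interval' hu.1 left_mem_uIcc)).mono
    Icc_subset_uIcc).congr hu.2.2.1

lemma const_mul_add_const_mul (hu : IsIntegratedSolR a b p q r lam u u1 ua u1a)
    (hv : IsIntegratedSolR a b p q r lam v v1 va v1a) (c d : ℝ) :
    IsIntegratedSolR a b p q r lam (fun t => c * u t + d * v t) (fun t => c * u1 t + d * v1 t)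
      (c * ua + d * va) (c * u1a + d * v1a) := by
  obtain ⟨hu₁, hu₂, hu₃, hu₄⟩ := hu
  obtain ⟨hv₁, hv₂, hv₃, hv₄⟩ := hv
  have e₁ : (fun t => (c * u1 t + d * v1 t) / p t) =
      fun t => c * (u1 t / p t) + d * (v1 t / p t) := by
    ext; ring
  have e₂ : (fun t => (q t - lam * r t) * (c * u t + d * v t)) =
      fun t => c * ((q t - lam * r t) * u t) + d * ((q t - lam * r t) * v t) := by
    ext; ring
  have hsub : ∀ x ∈ Icc a b, uIcc a x ⊆ uIcc a b := fun x hx =>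
    uIcc_subset_uIcc_left (Icc_subset_uIcc hx)
  refine ⟨e₁ ▸ (hu₁.const_mul c).add (hv₁.const_mul d),
    e₂ ▸ (hu₂.const_mul c).add (hv₂.const_mul d), fun x hx => ?_, fun x hx => ?_⟩
  · simp only [e₁]
    rw [integral_add ((hu₁.mono_set (hsub x hx)).const_mul c)
      ((hv₁.mono_set (hsub x hx)).const_mul d), intervalIntegral.integral_const_mul,
      intervalIntegral.integral_const_mul, hu₃ x hx, hv₃ x hx]
    ring
  · simp only [e₂]
    rw [integral_add ((hu₂.mono_set (hsub x hx)).const_mul c)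
      ((hv₂.mono_set (hsub x hx)).const_mul d), intervalIntegral.integral_const_mul,
      intervalIntegral.integral_const_mul, hu₄ x hx, hv₄ x hx]
    ring

lemma initial_eq_zero_of_ae_eq_zero (hu : IsIntegratedSolR a b p q r lam u u1 ua u1a) {x : ℝ}
    (hax : a < x) (hxb : x ≤ b) (hp : ∀ᵐ t ∂volume.restrict (Ioc a x), 0 < p t)
    (h0 : ∀ᵐ t ∂volume.restrict (Ioc a x), u t = 0) : ua = 0 ∧ u1a = 0 := by
  have hIcc : Icc a x ⊆ Icc a b := Icc_subset_Icc_right hxb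
  have hzero : EqOn u 0 (Icc a x) := by
    refine Measure.eqOn_Icc_of_ae_eq volume hax.ne ?_ (hu.continuousOn.mono hIcc)
      continuousOn_const
    rwa [Measure.restrict_congr_set Ioc_ae_eq_Icc.symm]
  have hua : ua = 0 := by
    simpa using (hu.2.2.1 a (hIcc (left_mem_Icc.mpr hax.le))).symm.trans
      (hzero (left_mem_Icc.mpr hax.le))
  have hu1 : ∀ t ∈ Icc a x, u1 t = u1a := by
    intro t ht
    rw [hu.2.2.2 t (hIcc ht), add_eq_left]
    refine (integral_congr fun s hs => ?_).trans integral_zero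
    rw [uIcc_of_le ht.1] at hs
    simp [hzero (Icc_subset_Icc_right ht.2 hs)]
  have hint : ∫ t in a..x, u1a * (u1 t / p t) = 0 := by
    have hux := hu.2.2.1 x (hIcc (right_mem_Icc.mpr hax.le))
    rw [hzero (right_mem_Icc.mpr hax.le), hua, Pi.zero_apply, zero_add] at hux
    rw [intervalIntegral.integral_const_mul, ← hux, mul_zero]
  have hsq : ∀ᵐ t ∂volume.restrict (Ioc a x), u1a * (u1 t / p t) = u1a ^ 2 / p t := by
    filter_upwards [ae_restrict_mem measurableSet_Ioc] with t ht
    rw [hu1 t (Ioc_subset_Icc_self ht)]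
    ring
  have hnn : 0 ≤ᵐ[volume.restrict (Ioc a x)] fun t => u1a * (u1 t / p t) := by
    filter_upwards [hsq, hp] with t h₁ h₂
    rw [h₁]
    positivity
  have hux1 : IntervalIntegrable (fun t => u1a * (u1 t / p t)) volume a x :=
    (hu.1.mono_set (uIcc_subset_uIcc_left (Icc_subset_uIcc ⟨hax.le, hxb⟩))).const_mul u1a
  have hint0 := (integral_eq_zero_iff_of_le_of_nonneg_ae hax.le hnn hux1).mp hint
  have : (ae (volume.restrict (Ioc a x))).NeBot := ae_restrict_neBot.mpr (by simp [hax])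
  obtain ⟨t, h₁, h₂, h₃⟩ := (hsq.and (hp.and hint0)).exists
  refine ⟨hua, ?_⟩
  simpa [h₂.ne'] using h₁.symm.trans h₃

lemma wronskian_eq (hu : IsIntegratedSolR a b p q r lam u u1 ua u1a)
    (hv : IsIntegratedSolR a b p q r lam v v1 va v1a) {x : ℝ} (hx : x ∈ Icc a b) :
    u x * v1 x - v x * u1 x = ua * v1a - va * u1a := by
  have hab : a ≤ b := hx.1.trans hx.2
  have ha : a ∈ uIcc a b := left_mem_uIcc
  let W : ℝ → ℝ := fun s =>
    (ua + ∫ t in a..s, u1 t / p t) * (v1a + ∫ t in a..s, (q t - lam * r t) * v t) -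
      (va + ∫ t in a..s, v1 t / p t) * (u1a + ∫ t in a..s, (q t - lam * r t) * u t)
  have hWac : AbsolutelyContinuousOnInterval W a b :=
    ((absolutelyContinuousOnInterval_const_add_integral hu.1 ua).fun_mul
      (absolutelyContinuousOnInterval_const_add_integral hv.2.1 v1a)).fun_sub
    ((absolutelyContinuousOnInterval_const_add_integral hv.1 va).fun_mul
      (absolutelyContinuousOnInterval_const_add_integral hu.2.1 u1a))
  have hW' : ∀ᵐ s, s ∈ uIcc a b → HasDerivAt W 0 s := by
    filter_upwards [hu.1.ae_hasDerivAt_integral, hu.2.1.ae_hasDerivAt_integral,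
      hv.1.ae_hasDerivAt_integral, hv.2.1.ae_hasDerivAt_integral] with s h₁ h₂ h₃ h₄ hs
    have hs' : s ∈ Icc a b := by rwa [uIcc_of_le hab] at hs
    refine ((((h₁ hs a ha).const_add ua).mul ((h₄ hs a ha).const_add v1a)).sub
      (((h₃ hs a ha).const_add va).mul ((h₂ hs a ha).const_add u1a))).congr_deriv ?_
    rw [← hu.2.2.1 s hs', ← hu.2.2.2 s hs', ← hv.2.2.1 s hs', ← hv.2.2.2 s hs']
    ring
  obtain ⟨C, hC⟩ := hWac.const_of_ae_hasDerivAt_zero hW'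
  have hWx := hC x (Icc_subset_uIcc hx)
  have hWa := hC a ha
  simp only [W, integral_same, add_zero] at hWa hWx
  rw [hu.2.2.1 x hx, hu.2.2.2 x hx, hv.2.2.1 x hx, hv.2.2.2 x hx, hWx, hWa]

theorem sq_integral_mul_lt (hu : IsIntegratedSolR a b p q r lam u u1 ua u1a)
    (hv : IsIntegratedSolR a b p q r lam v v1 va v1a) (hdet : ua * v1a - va * u1a ≠ 0) {x : ℝ}
    (hax : a < x) (hxb : x ≤ b) (hr : ∀ᵐ t ∂volume.restrict (Ioc a x), 0 < r t)
    (hri : IntervalIntegrable r volume a x) (hp : ∀ᵐ t ∂volume.restrict (Ioc a x), 0 < p t) :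
    (∫ t in a..x, r t * u t * v t) ^ 2 <
      (∫ t in a..x, r t * u t ^ 2) * ∫ t in a..x, r t * v t ^ 2 := by
  have hIcc : uIcc a x ⊆ Icc a b := by
    rw [uIcc_of_le hax.le]
    exact Icc_subset_Icc_right hxb
  have hcu := hu.continuousOn.mono hIcc
  have hcv := hv.continuousOn.mono hIcc
  simp only [integral_of_le hax.le]
  refine sq_integral_mul_lt_of_linearIndependent hr (hri.mul_continuousOn (hcu.pow 2)).1
    ((hri.mul_continuousOn hcu).mul_continuousOn hcv).1 (hri.mul_continuousOn (hcv.pow 2)).1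
    fun c d h => ?_
  obtain ⟨h₁, h₂⟩ :=
    (hu.const_mul_add_const_mul hv c d).initial_eq_zero_of_ae_eq_zero hax hxb hp h
  constructor
  · apply mul_left_cancel₀ hdet
    linear_combination v1a * h₁ - va * h₂
  · apply mul_left_cancel₀ hdet
    linear_combination ua * h₂ - u1a * h₁

end IsIntegratedSolR

theorem statement3_general (a b : ℝ) (p q r : ℝ → ℝ)
    (hpqr : Hyp31 a b p q r) (lam : ℝ)
    (θ θ1 φ φ1 : ℝ → ℝ)
    (hθ : IsIntegratedSolR a b p q r lam θ θ1 1 0)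
    (hφ : IsIntegratedSolR a b p q r lam φ φ1 0 1)
    (A B C θd θd1 φd φd1 : ℝ → ℝ)
    (hA : ∀ x, A x = ∫ t in a..x, r t * φ t * θ t)
    (hB : ∀ x, B x = ∫ t in a..x, r t * θ t ^ 2)
    (hC : ∀ x, C x = ∫ t in a..x, r t * φ t ^ 2)
    (hθd : ∀ x, θd x = θ x * A x - φ x * B x)
    (hθd1 : ∀ x, θd1 x = θ1 x * A x - φ1 x * B x)
    (hφd : ∀ x, φd x = θ x * C x - φ x * A x)
    (hφd1 : ∀ x, φd1 x = θ1 x * C x - φ1 x * A x) :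
    ∀ x ∈ Ioc a b,
      A x ^ 2 < B x * C x ∧
      φd x * θd1 x - φd1 x * θd x = A x ^ 2 - B x * C x ∧
      φd x * θd1 x - φd1 x * θd x < 0 := by
  obtain ⟨hr, hri, hp, -, -⟩ := hpqr
  rintro x ⟨hax, hxb⟩
  have hrestrict : ∀ {P : ℝ → Prop}, (∀ᵐ t ∂volume.restrict (Ioo a b), P t) →
      ∀ᵐ t ∂volume.restrict (Ioc a x), P t := fun h =>
    ae_restrict_of_ae_restrict_of_subset (Ioc_subset_Ioc_right hxb)
      (by rwa [← Measure.restrict_congr_set Ioo_ae_eq_Ioc])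
  have hCS : A x ^ 2 < B x * C x := by
    rw [mul_comm, hA, hB, hC]
    exact hφ.sq_integral_mul_lt hθ (by norm_num) hax hxb (hrestrict hr)
      ((intervalIntegrable_iff_integrableOn_Ioo_of_le hax.le).mpr
        (hri.mono_set (Ioo_subset_Ioo_right hxb))) (hrestrict hp)
  have hW : θ x * φ1 x - φ x * θ1 x = 1 := by simpa using hθ.wronskian_eq hφ ⟨hax.le, hxb⟩
  have hid : φd x * θd1 x - φd1 x * θd x = A x ^ 2 - B x * C x := by
    rw [hφd, hθd1, hφd1, hθd]
    linear_combination (A x ^ 2 - B x * C x) * hW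
  exact ⟨hCS, hid, by linarith⟩

theorem statement3 (a b : ℝ) (hab : a < b) (p q r : ℝ → ℝ)
    (hpqr : Hyp31 a b p q r) (lam : ℝ)
    (θ θ1 φ φ1 : ℝ → ℝ)
    (hθ : IsIntegratedSolR a b p q r lam θ θ1 1 0)
    (hφ : IsIntegratedSolR a b p q r lam φ φ1 0 1)
    (A B C θd θd1 φd φd1 : ℝ → ℝ)
    (hA : ∀ x, A x = ∫ t in a..x, r t * φ t * θ t)
    (hB : ∀ x, B x = ∫ t in a..x, r t * θ t ^ 2)
    (hC : ∀ x, C x = ∫ t in a..x, r t * φ t ^ 2)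
    (hθd : ∀ x, θd x = θ x * A x - φ x * B x)
    (hθd1 : ∀ x, θd1 x = θ1 x * A x - φ1 x * B x)
    (hφd : ∀ x, φd x = θ x * C x - φ x * A x)
    (hφd1 : ∀ x, φd1 x = θ1 x * C x - φ1 x * A x) :
    ∀ x ∈ Ioc a b,
      A x ^ 2 < B x * C x ∧
      φd x * θd1 x - φd1 x * θd x = A x ^ 2 - B x * C x ∧
      φd x * θd1 x - φd1 x * θd x < 0 :=
  statement3_general a b p q r hpqr lam θ θ1 φ φ1 hθ hφ A B C θd θd1 φd φd1 hA hB hC hθd hθd1 hφd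
    hφd1
end

section
/- Let L > 0, α, β ∈ (0,π), and θ₀ ∈ (π/2,π). Let F_{α,β}(z) = cos α(−sin β · C_L(z) + cos β · S_L(z)) − sin α(sin β · z · S_L(z) + cos β · C_L(z)). Then, writing z(t) = t e^{iθ₀} for t > 0 and using the principal square root, F_{α,β}(z(t)) / [−(i/2) z(t)^{1/2} sin α sin β exp(−i z(t)^{1/2} L)] − 1 = O(t^{−1/2}) as t → ∞. -/
/-!
With `w = z^{1/2}` one has `C_L(w²) = cos (wL)` and `w S_L(w²) = sin (wL)`, so the quotient
minus one is `-e^{2iwL}` plus terms of order `1/w` and `1/w²`. Along the ray `arg z = θ₀`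
the root `w = √t e^{iθ₀/2}` has `Im w = √t sin (θ₀/2) > 0`, so `e^{2iwL}` decays exponentially
in `√t` and every term is `O(t^{-1/2})`.
-/

open Complex Filter Asymptotics

/-- `CL L z = ∑ (-1)^k z^k L^(2k)/(2k)!`, the entire function with `CL L z = cos(√z L)`. -/
noncomputable def CL (L : ℝ) (z : ℂ) : ℂ :=
  ∑' k : ℕ, (-1 : ℂ) ^ k * z ^ k * (L : ℂ) ^ (2 * k) / (Nat.factorial (2 * k) : ℂ)

/-- `SL L z = ∑ (-1)^k z^k L^(2k+1)/(2k+1)!`, the entire function with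
`SL L z = sin(√z L)/√z`. -/
noncomputable def SL (L : ℝ) (z : ℂ) : ℂ :=
  ∑' k : ℕ, (-1 : ℂ) ^ k * z ^ k * (L : ℂ) ^ (2 * k + 1) / (Nat.factorial (2 * k + 1) : ℂ)

/-- The characteristic function `F_{α,β}` of `-d²/dx²` on an interval of length `L`
with separated boundary conditions given by `α`, `β`. -/
noncomputable def FSep (L α β : ℝ) (z : ℂ) : ℂ :=
  (Real.cos α : ℂ) * (-(Real.sin β : ℂ) * CL L z + (Real.cos β : ℂ) * SL L z)
    - (Real.sin α : ℂ) * ((Real.sin β : ℂ) * z * SL L z + (Real.cos β : ℂ) * CL L z)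

/-- The characteristic function `F_K` of the Krein--von Neumann extension of `-d²/dx²`
on an interval of length `L`. -/
noncomputable def FKrein (L : ℝ) (z : ℂ) : ℂ :=
  2 * (1 - CL L z) - (L : ℂ) * z * SL L z

lemma CL_sq (L : ℝ) (w : ℂ) : CL L (w ^ 2) = cos (w * L) := by
  rw [cos_eq_tsum, CL]
  refine tsum_congr fun k => ?_
  rw [mul_pow, pow_mul]
  ring

lemma mul_SL_sq (L : ℝ) (w : ℂ) : w * SL L (w ^ 2) = sin (w * L) := by
  rw [sin_eq_tsum, SL, ← tsum_mul_left]
  refine tsum_congr fun k => ?_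
  rw [mul_pow, pow_add, pow_mul, pow_one]
  ring

lemma FSep_sq_div_sub_one (L : ℝ) {α β : ℝ} (hα : Real.sin α ≠ 0) (hβ : Real.sin β ≠ 0)
    {w : ℂ} (hw : w ≠ 0) :
    FSep L α β (w ^ 2) / (-(I / 2) * w * Real.sin α * Real.sin β * exp (-I * w * L)) - 1
      = -exp (I * w * L) ^ 2
        - I * Real.sin (α + β) * (1 + exp (I * w * L) ^ 2) / (w * Real.sin α * Real.sin β)
        - Real.cos α * Real.cos β * (1 - exp (I * w * L) ^ 2)
          / (w ^ 2 * Real.sin α * Real.sin β) := by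
  have hSL : SL L (w ^ 2) = sin (w * L) / w := by
    rw [eq_div_iff hw, mul_comm, mul_SL_sq]
  have hα' : (Real.sin α : ℂ) ≠ 0 := mod_cast hα
  have hβ' : (Real.sin β : ℂ) ≠ 0 := mod_cast hβ
  have hE : exp (-I * w * L) = (exp (I * w * L))⁻¹ := by rw [← exp_neg, neg_mul, neg_mul]
  have hcos : cos (w * L) = (exp (I * w * L) + (exp (I * w * L))⁻¹) / 2 := by
    rw [cos, ← hE]; ring_nf
  have hsin : sin (w * L) = ((exp (I * w * L))⁻¹ - exp (I * w * L)) * I / 2 := by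
    rw [sin, ← hE]; ring_nf
  have hE0 := exp_ne_zero (I * w * L)
  rw [FSep, CL_sq, hSL, hcos, hsin, hE, Real.sin_add, ofReal_add, ofReal_mul, ofReal_mul]
  field_simp
  linear_combination w * (Real.cos α * Real.sin β + Real.sin α * Real.cos β)
    * (1 + exp (I * w * L) ^ 2) * I_sq

lemma exp_I_mul_ofReal_mul_sq_isBigO_inv {L : ℝ} (hL : 0 < L) {ζ : ℂ} (hζ : 0 < ζ.im) :
    (fun r : ℝ => exp (I * (r * ζ) * L) ^ 2) =O[atTop] fun r => r⁻¹ := by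
  have hdecay :=
    (isLittleO_exp_neg_mul_rpow_atTop (by positivity : 0 < 2 * L * ζ.im) (-1)).isBigO
  simp only [Real.rpow_neg_one] at hdecay
  refine isBigO_norm_left.mp (hdecay.congr_left ?_)
  intro r
  rw [norm_pow, norm_exp, ← Real.exp_nat_mul]
  simp only [neg_mul, Nat.cast_ofNat, mul_re, I_re, I_im, mul_im, ofReal_re, ofReal_im,
    zero_mul, one_mul, mul_zero, mul_neg, sub_zero, add_zero, zero_sub, zero_add, Real.exp_eq_exp,
    neg_inj]
  ring

lemma inv_ofReal_mul_isBigO_inv (ζ : ℂ) :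
    (fun r : ℝ => ((r : ℂ) * ζ)⁻¹) =O[atTop] fun r => r⁻¹ :=
  isBigO_of_le' (c := ‖ζ‖⁻¹) _ fun r => by simp [mul_comm]

lemma FSep_ofReal_mul_sq_div_sub_one_isBigO_inv {L : ℝ} (hL : 0 < L) {α β : ℝ}
    (hα : Real.sin α ≠ 0) (hβ : Real.sin β ≠ 0) {ζ : ℂ} (hζ : 0 < ζ.im) :
    (fun r : ℝ => FSep L α β ((r * ζ) ^ 2)
        / (-(I / 2) * (r * ζ) * Real.sin α * Real.sin β * exp (-I * (r * ζ) * L)) - 1)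
      =O[atTop] fun r => r⁻¹ := by
  set E := fun r : ℝ => exp (I * (r * ζ) * L) ^ 2
  set u := fun r : ℝ => ((r : ℂ) * ζ)⁻¹
  have hE : E =O[atTop] fun r => r⁻¹ := exp_I_mul_ofReal_mul_sq_isBigO_inv hL hζ
  have hu : u =O[atTop] fun r => r⁻¹ := inv_ofReal_mul_isBigO_inv ζ
  have hinv_one : (fun r : ℝ => r⁻¹) =O[atTop] fun _ => (1 : ℝ) :=
    tendsto_inv_atTop_zero.isBigO_one ℝ
  have hE_one : E =O[atTop] fun _ => (1 : ℝ) := hE.trans hinv_one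
  have hadd : (fun r => (1 + E r) * u r) =O[atTop] fun r => r⁻¹ := by
    simpa only [one_mul] using ((isBigO_const_one ℝ (1 : ℂ) atTop).add hE_one).mul hu
  have hsub : (fun r => (1 - E r) * u r ^ 2) =O[atTop] fun r => r⁻¹ := by
    simpa only [one_mul, mul_one, sq] using
      ((isBigO_const_one ℝ (1 : ℂ) atTop).sub hE_one).mul (hu.mul (hu.trans hinv_one))
  have hsum := (hE.neg_left.sub
    (hadd.const_mul_left (I * Real.sin (α + β) / (Real.sin α * Real.sin β)))).sub
    (hsub.const_mul_left (Real.cos α * Real.cos β / (Real.sin α * Real.sin β)))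
  refine hsum.congr' ?_ EventuallyEq.rfl
  filter_upwards [eventually_gt_atTop 0] with r hr
  have hζ0 : ζ ≠ 0 := fun h => hζ.ne' (by simp [h])
  rw [FSep_sq_div_sub_one L hα hβ (mul_ne_zero (ofReal_ne_zero.mpr hr.ne') hζ0)]
  simp only [E, u]
  field_simp

theorem statement8 (L : ℝ) (hL : 0 < L) (α β θ₀ : ℝ)
    (hα : α ∈ Set.Ioo 0 Real.pi) (hβ : β ∈ Set.Ioo 0 Real.pi)
    (hθ₀ : θ₀ ∈ Set.Ioo (Real.pi / 2) Real.pi) :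
    (fun t : ℝ =>
      FSep L α β ((t : ℂ) * Complex.exp (Complex.I * θ₀)) /
        (-(Complex.I / 2) * ((t : ℂ) * Complex.exp (Complex.I * θ₀)) ^ (1 / 2 : ℂ)
          * (Real.sin α : ℂ) * (Real.sin β : ℂ)
          * Complex.exp (-Complex.I * ((t : ℂ) * Complex.exp (Complex.I * θ₀)) ^ (1 / 2 : ℂ) * L))
        - 1)
      =O[atTop] (fun t : ℝ => t ^ (-(1 / 2 : ℝ))) := by
  obtain ⟨hθ_lo, hθ_hi⟩ := hθ₀
  set ζ := exp ((θ₀ / 2 : ℝ) * I)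
  have hζ_re : 0 < ζ.re := by
    rw [exp_ofReal_mul_I_re]
    exact Real.cos_pos_of_mem_Ioo ⟨by linarith [Real.pi_pos], by linarith⟩
  have hζ_im : 0 < ζ.im := by
    rw [exp_ofReal_mul_I_im]
    exact Real.sin_pos_of_pos_of_lt_pi (by linarith [Real.pi_pos]) (by linarith)
  have hsin_α := (Real.sin_pos_of_pos_of_lt_pi hα.1 hα.2).ne'
  have hsin_β := (Real.sin_pos_of_pos_of_lt_pi hβ.1 hβ.2).ne'
  have hray := (FSep_ofReal_mul_sq_div_sub_one_isBigO_inv hL hsin_α hsin_β hζ_im).comp_tendsto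
    Real.tendsto_sqrt_atTop
  refine hray.congr' ?_ ?_
  all_goals filter_upwards [eventually_gt_atTop 0] with t ht
  · have hsq : ((√t : ℝ) * ζ) ^ 2 = (t : ℂ) * exp (I * θ₀) := by
      rw [mul_pow, ← ofReal_pow, Real.sq_sqrt ht.le, ← exp_nat_mul]
      push_cast
      ring_nf
    have hroot : ((t : ℂ) * exp (I * θ₀)) ^ (1 / 2 : ℂ) = (√t : ℝ) * ζ := by
      rw [← hsq, one_div, sq_cpow_two_inv (by rw [re_ofReal_mul]; positivity)]
    simp only [Function.comp, hsq, hroot]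
  · simp only [Function.comp, Real.sqrt_eq_rpow, Real.rpow_neg ht.le]
end

section
/- Let L > 0 and θ₀ ∈ (π/2,π). Let F_K(z) = 2(1 − C_L(z)) − L · z · S_L(z) (equivalently, F_K(z) = 2[1 − cos(z^{1/2}L)] − L z^{1/2} sin(z^{1/2}L)). Then, writing z(t) = t e^{iθ₀} for t > 0 and using the principal square root, F_K(z(t)) / [−(i/2) L z(t)^{1/2} exp(−i z(t)^{1/2} L)] − 1 = O(t^{−1/2}) as t → ∞. -/
open Complex Filter Asymptotics

/-! With `w = √t e^{iθ₀/2}` we have `z = t e^{iθ₀} = w²` and `w = z^{1/2}` (as `Re w > 0`),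
while `C_L(w²) = cos(wL)` and `w² S_L(w²) = w sin(wL)`. Since `Im w > 0`, the factor `e^{-iwL}`
grows like `e^{L Im w}` and `e^{iwL}` decays, so
`F_K(w²) = -(i/2) L w e^{-iwL} + O(e^{L Im w}) + O(|w| e^{-L Im w})`.
Dividing by the leading term leaves `O(1/|w|) + O(e^{-2L Im w}) = O(t^{-1/2})`. -/

lemma CL_mul_self (L : ℝ) (w : ℂ) : CL L (w * w) = cos (w * L) := by
  rw [CL, ← (hasSum_cos (w * L)).tsum_eq]
  refine tsum_congr fun k => ?_
  rw [mul_pow, pow_mul, sq, mul_pow]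
  ring

lemma mul_self_mul_SL_mul_self (L : ℝ) (w : ℂ) : w * w * SL L (w * w) = w * sin (w * L) := by
  rw [SL, ← tsum_mul_left, ← ((hasSum_sin (w * L)).mul_left w).tsum_eq]
  refine tsum_congr fun k => ?_
  rw [mul_pow, pow_succ, pow_mul, sq, mul_pow]
  ring

lemma FKrein_mul_self (L : ℝ) (w : ℂ) :
    FKrein L (w * w) = -(I / 2) * L * w * exp (-I * w * L)
      + (2 - exp (I * w * L) - exp (-I * w * L) + I * L * w / 2 * exp (I * w * L)) := by
  rw [FKrein, CL_mul_self, mul_assoc, mul_self_mul_SL_mul_self, cos, sin]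
  ring_nf

lemma norm_exp_I_mul_mul_ofReal (w : ℂ) (L : ℝ) :
    ‖exp (I * w * L)‖ = Real.exp (-(w.im * L)) := by
  simp [norm_exp]

lemma norm_exp_neg_I_mul_mul_ofReal (w : ℂ) (L : ℝ) :
    ‖exp (-I * w * L)‖ = Real.exp (w.im * L) := by
  simp [norm_exp]

lemma Real.exp_neg_two_mul_le {m : ℝ} (hm : 0 < m) : Real.exp (-(2 * m)) ≤ 1 / (2 * m) := by
  rw [Real.exp_neg, inv_eq_one_div]
  gcongr
  linarith [Real.add_one_le_exp (2 * m)]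

lemma norm_FKrein_mul_self_div_sub_one_le {L : ℝ} (hL : 0 < L) {w : ℂ} (hw : 0 < w.im) :
    ‖FKrein L (w * w) / (-(I / 2) * L * w * exp (-I * w * L)) - 1‖
      ≤ 8 / (L * ‖w‖) + 1 / (2 * L * w.im) := by
  set m := w.im * L
  have hm : 0 < m := mul_pos hw hL
  have hw0 : 0 < ‖w‖ := norm_pos_iff.2 fun h => by simp [h] at hw
  have hD : ‖-(I / 2) * L * w * exp (-I * w * L)‖ = L * ‖w‖ / 2 * Real.exp m := by
    simp only [norm_mul, norm_neg, norm_div, norm_I, Complex.norm_two, norm_real,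
      Real.norm_eq_abs, abs_of_pos hL, norm_exp_neg_I_mul_mul_ofReal]
    ring
  have hR : ‖2 - exp (I * w * L) - exp (-I * w * L) + I * L * w / 2 * exp (I * w * L)‖
      ≤ 4 * Real.exp m + L * ‖w‖ / 2 * Real.exp (-m) := by
    have hexp_neg_le : Real.exp (-m) ≤ Real.exp m := Real.exp_le_exp.2 (by linarith)
    have hone_le : 1 ≤ Real.exp m := Real.one_le_exp hm.le
    calc _ ≤ ‖(2 : ℂ) - exp (I * w * L) - exp (-I * w * L)‖
            + ‖I * L * w / 2 * exp (I * w * L)‖ := norm_add_le _ _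
      _ ≤ ‖(2 : ℂ)‖ + ‖exp (I * w * L)‖ + ‖exp (-I * w * L)‖
            + ‖I * L * w / 2 * exp (I * w * L)‖ := by
          gcongr
          exact (norm_sub_le _ _).trans (by gcongr; exact norm_sub_le _ _)
      _ = 2 + Real.exp (-m) + Real.exp m + L * ‖w‖ / 2 * Real.exp (-m) := by
          simp only [norm_mul, norm_div, norm_I, Complex.norm_two, norm_real, Real.norm_eq_abs,
            abs_of_pos hL, norm_exp_I_mul_mul_ofReal, norm_exp_neg_I_mul_mul_ofReal]
          ring
      _ ≤ 4 * Real.exp m + L * ‖w‖ / 2 * Real.exp (-m) := by linarith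
  have hD0 : -(I / 2) * L * w * exp (-I * w * L) ≠ 0 := by
    rw [← norm_ne_zero_iff, hD]; positivity
  rw [FKrein_mul_self, div_sub_one hD0, add_sub_cancel_left, norm_div, hD]
  calc _ ≤ (4 * Real.exp m + L * ‖w‖ / 2 * Real.exp (-m)) / (L * ‖w‖ / 2 * Real.exp m) :=
        by gcongr
    _ = 8 / (L * ‖w‖) + Real.exp (-(2 * m)) := by
        rw [show -(2 * m) = -m - m by ring, Real.exp_sub]
        field_simp
        ring
    _ ≤ 8 / (L * ‖w‖) + 1 / (2 * L * w.im) := by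
        grw [Real.exp_neg_two_mul_le hm]
        exact le_of_eq (by ring)

lemma ofReal_mul_exp_eq_mul_self {t : ℝ} (ht : 0 ≤ t) (θ : ℝ) :
    (t : ℂ) * exp (I * θ)
      = Real.sqrt t * exp (I * (θ / 2 : ℝ)) * (Real.sqrt t * exp (I * (θ / 2 : ℝ))) := by
  rw [mul_mul_mul_comm, ← ofReal_mul, Real.mul_self_sqrt ht, ← exp_add]
  push_cast
  ring_nf

lemma ofReal_mul_exp_cpow_one_div_two {t θ : ℝ} (ht : 0 < t)
    (hθ : θ ∈ Set.Ioo (-Real.pi) Real.pi) :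
    ((t : ℂ) * exp (I * θ)) ^ (1 / 2 : ℂ) = Real.sqrt t * exp (I * (θ / 2 : ℝ)) := by
  have hre : 0 < (Real.sqrt t * exp (I * (θ / 2 : ℝ))).re := by
    rw [re_ofReal_mul, mul_comm I, exp_ofReal_mul_I_re]
    exact mul_pos (Real.sqrt_pos.2 ht)
      (Real.cos_pos_of_mem_Ioo ⟨by linarith [hθ.1], by linarith [hθ.2]⟩)
  rw [ofReal_mul_exp_eq_mul_self ht.le, ← sq, one_div, sq_cpow_two_inv hre]

theorem statement9 (L : ℝ) (hL : 0 < L) (θ₀ : ℝ)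
    (hθ₀ : θ₀ ∈ Set.Ioo (Real.pi / 2) Real.pi) :
    (fun t : ℝ =>
      FKrein L ((t : ℂ) * Complex.exp (Complex.I * θ₀)) /
        (-(Complex.I / 2) * (L : ℂ) * ((t : ℂ) * Complex.exp (Complex.I * θ₀)) ^ (1 / 2 : ℂ)
          * Complex.exp (-Complex.I * ((t : ℂ) * Complex.exp (Complex.I * θ₀)) ^ (1 / 2 : ℂ) * L))
        - 1)
      =O[atTop] (fun t : ℝ => t ^ (-(1 / 2 : ℝ))) := by
  obtain ⟨hθ₁, hθ₂⟩ := hθ₀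
  have hsin : 0 < Real.sin (θ₀ / 2) :=
    Real.sin_pos_of_pos_of_lt_pi (by linarith [Real.pi_pos]) (by linarith)
  refine isBigO_iff.2 ⟨8 / L + 1 / (2 * L * Real.sin (θ₀ / 2)), ?_⟩
  filter_upwards [eventually_gt_atTop 0] with t ht
  rw [ofReal_mul_exp_cpow_one_div_two ht ⟨by linarith [Real.pi_pos], hθ₂⟩,
    ofReal_mul_exp_eq_mul_self ht.le]
  have hnorm : ‖(Real.sqrt t : ℂ) * exp (I * (θ₀ / 2 : ℝ))‖ = Real.sqrt t := by
    rw [norm_mul, norm_exp_I_mul_ofReal, norm_real, Real.norm_of_nonneg (Real.sqrt_nonneg t),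
      mul_one]
  have him :
      ((Real.sqrt t : ℂ) * exp (I * (θ₀ / 2 : ℝ))).im = Real.sqrt t * Real.sin (θ₀ / 2) := by
    rw [im_ofReal_mul, mul_comm I, exp_ofReal_mul_I_im]
  have hrpow : ‖t ^ (-(1 / 2 : ℝ))‖ = (Real.sqrt t)⁻¹ := by
    rw [Real.norm_of_nonneg (by positivity), Real.rpow_neg ht.le, Real.sqrt_eq_rpow]
  refine (norm_FKrein_mul_self_div_sub_one_le hL (by rw [him]; positivity)).trans_eq ?_
  rw [hnorm, him, hrpow]
  field_simp
end

section
/- Let n₁, n₂ ∈ ℕ with n₁, n₂ ≥ 1, and m_j ∈ (n_j, n_j+1) for j = 1, 2. For ℓ = 1, 2, 3, … set λ_ℓ^{(j)} = ℓ² − m_j². Define the relative spectral zeta series ζ(s) = ∑_{ℓ=1}^∞ [(λ_ℓ^{(2)})^{−s} − (λ_ℓ^{(1)})^{−s}], where for λ > 0, λ^{−s} := exp(−s log λ) with the real logarithm, and for λ < 0, λ^{−s} := exp(−s(log|λ| − iπ)). Then there exists a function Z : ℂ → ℂ, holomorphic on Ω = {s ∈ ℂ | −1/2 < Re s < 1 and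 s ≠ 1/2}, such that Z(s) = ζ(s) for all s with 1/2 < Re s < 1, and Z'(0) = iπ(n₂ − n₁) + log(|sin(πm₁) m₂ / (sin(πm₂) m₁)|). -/
/-!
For large `ℓ` both eigenvalues are positive and `log λ_ℓ⁽²⁾ - log λ_ℓ⁽¹⁾ = O(ℓ⁻²)`, so the `ℓ`-th
term of the relative series is `O(ℓ^(2σ-2))` uniformly on bounded parts of `Re s > -σ`. Hence the
series itself converges locally uniformly on `Re s > -1/2` and is the continuation `Z`, and `Z'(0)`
is the termwise sum of `log λ_ℓ⁽¹⁾ - log λ_ℓ⁽²⁾` for the branch logarithm. Each negative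
eigenvalue contributes `-iπ` to its logarithm; after removing `log ℓ²` the real parts sum to the
logarithms of Euler's products `sin (π m) / (π m) = ∏ (1 - m² / ℓ²)`.
-/

open Complex Filter

/-- The paper's branch convention for `λ^{-s}`: for `λ > 0`, `λ^{-s} = exp(-s log λ)`;
for `λ < 0` (and `λ = 0`), `λ^{-s} = exp(-s (log|λ| - iπ))`. -/
noncomputable def branchPow (lam : ℝ) (s : ℂ) : ℂ :=
  if 0 < lam then Complex.exp (-s * (Real.log lam : ℂ))
  else Complex.exp (-s * ((Real.log |lam| : ℂ) - Real.pi * Complex.I))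

open Topology Finset
open scoped Real

noncomputable def branchLog (lam : ℝ) : ℂ :=
  Real.log |lam| - if 0 < lam then 0 else π * I

lemma branchPow_eq_cexp (lam : ℝ) (s : ℂ) : branchPow lam s = exp (-s * branchLog lam) := by
  unfold branchPow branchLog
  split_ifs with h
  · rw [abs_of_pos h, sub_zero]
  · rfl

lemma branchPow_of_pos {lam : ℝ} (h : 0 < lam) (s : ℂ) :
    branchPow lam s = exp (-s * Real.log lam) := if_pos h

lemma hasDerivAt_branchPow (lam : ℝ) (s : ℂ) :
    HasDerivAt (branchPow lam) (branchPow lam s * -branchLog lam) s := by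
  simp only [funext (branchPow_eq_cexp lam)]
  simpa using ((hasDerivAt_neg s).mul_const (branchLog lam)).cexp

lemma branchPow_zero (lam : ℝ) : branchPow lam 0 = 1 := by
  simp [branchPow_eq_cexp]

lemma abs_log_sub_log_le {x y c : ℝ} (hc : 0 < c) (hx : c ≤ x) (hy : c ≤ y) :
    |Real.log x - Real.log y| ≤ |x - y| / c := by
  have key : ∀ {a b : ℝ}, c ≤ a → c ≤ b → Real.log a - Real.log b ≤ |a - b| / c := by
    intro a b ha hb
    have hb0 : 0 < b := hc.trans_le hb
    calc Real.log a - Real.log b = Real.log (a / b) := (Real.log_div (by linarith) hb0.ne').symm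
      _ ≤ a / b - 1 := Real.log_le_sub_one_of_pos (div_pos (by linarith) hb0)
      _ = (a - b) / b := by field_simp
      _ ≤ |a - b| / c := div_le_div₀ (abs_nonneg _) (le_abs_self _) hc hb
  rw [abs_sub_le_iff]
  exact ⟨key hx hy, abs_sub_comm x y ▸ key hy hx⟩

lemma norm_cexp_sub_cexp_le {a b : ℝ} {s : ℂ} (h : ‖s‖ * |a - b| ≤ 1) :
    ‖exp (-s * a) - exp (-s * b)‖ ≤ 2 * (‖s‖ * |a - b|) * Real.exp (-s.re * b) := by
  have hz : ‖-s * ((a - b : ℝ) : ℂ)‖ = ‖s‖ * |a - b| := by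
    rw [norm_mul, norm_neg, Complex.norm_real, Real.norm_eq_abs]
  have hfac : exp (-s * a) - exp (-s * b) = (exp (-s * ((a - b : ℝ) : ℂ)) - 1) * exp (-s * b) := by
    rw [sub_mul, one_mul, ← Complex.exp_add]
    push_cast
    ring_nf
  rw [hfac, norm_mul, Complex.norm_exp, ← hz]
  gcongr
  · exact norm_exp_sub_one_le (hz ▸ h)
  · simp

/- The thresholds on `x` make both eigenvalues at least `x² / 2` (so their logarithms differ by
`O(x⁻²)`), the first one at least `1` (so its logarithm is nonnegative), and the exponent small
enough for `‖exp z - 1‖ ≤ 2 ‖z‖`. -/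
lemma norm_branchPow_sub_branchPow_le {m₁ m₂ σ R x : ℝ} {s : ℂ} (hσ : 0 ≤ σ) (hx : 0 < x)
    (h₁ : 2 * m₁ ^ 2 + 2 ≤ x ^ 2) (h₂ : 2 * m₂ ^ 2 ≤ x ^ 2)
    (hR : 2 * R * |m₂ ^ 2 - m₁ ^ 2| ≤ x ^ 2) (hs : -σ ≤ s.re) (hsR : ‖s‖ ≤ R) :
    ‖branchPow (x ^ 2 - m₂ ^ 2) s - branchPow (x ^ 2 - m₁ ^ 2) s‖
      ≤ 4 * R * |m₂ ^ 2 - m₁ ^ 2| * x ^ (2 * σ - 2) := by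
  have hx2 : 0 < x ^ 2 := by positivity
  have hlog : |Real.log (x ^ 2 - m₂ ^ 2) - Real.log (x ^ 2 - m₁ ^ 2)|
      ≤ 2 * |m₂ ^ 2 - m₁ ^ 2| / x ^ 2 := by
    calc _ ≤ |(x ^ 2 - m₂ ^ 2) - (x ^ 2 - m₁ ^ 2)| / (x ^ 2 / 2) :=
          abs_log_sub_log_le (by positivity) (by nlinarith) (by nlinarith)
      _ = 2 * |m₂ ^ 2 - m₁ ^ 2| / x ^ 2 := by
          rw [abs_sub_comm, show (x ^ 2 - m₁ ^ 2) - (x ^ 2 - m₂ ^ 2) = m₂ ^ 2 - m₁ ^ 2 by ring]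
          field_simp
  have hsmall : ‖s‖ * |Real.log (x ^ 2 - m₂ ^ 2) - Real.log (x ^ 2 - m₁ ^ 2)|
      ≤ R * (2 * |m₂ ^ 2 - m₁ ^ 2| / x ^ 2) :=
    mul_le_mul hsR hlog (abs_nonneg _) ((norm_nonneg s).trans hsR)
  have hb₀ : 0 ≤ Real.log (x ^ 2 - m₁ ^ 2) := Real.log_nonneg (by nlinarith)
  have hb₁ : Real.log (x ^ 2 - m₁ ^ 2) ≤ Real.log (x ^ 2) :=
    Real.log_le_log (by nlinarith) (by nlinarith)
  rw [branchPow_of_pos (by nlinarith), branchPow_of_pos (by nlinarith)]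
  calc _ ≤ 2 * (‖s‖ * |Real.log (x ^ 2 - m₂ ^ 2) - Real.log (x ^ 2 - m₁ ^ 2)|)
          * Real.exp (-s.re * Real.log (x ^ 2 - m₁ ^ 2)) := by
        refine norm_cexp_sub_cexp_le (hsmall.trans ?_)
        rw [← mul_div_assoc, div_le_one hx2]
        linarith
    _ ≤ 2 * (R * (2 * |m₂ ^ 2 - m₁ ^ 2| / x ^ 2)) * Real.exp (σ * Real.log (x ^ 2)) := by
        have hR₀ : 0 ≤ R := (norm_nonneg s).trans hsR
        gcongr
        linarith
    _ = 4 * R * |m₂ ^ 2 - m₁ ^ 2| * x ^ (2 * σ - 2) := by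
        rw [Real.rpow_sub hx, Real.rpow_two, Real.rpow_def_of_pos hx, Real.log_pow]
        field_simp
        ring_nf

section TsumCofinite

variable {ι E : Type*} [NormedAddCommGroup E] [NormedSpace ℂ E] [CompleteSpace E]
  {F : ι → ℂ → E} {U : Set ℂ} {u : ι → ℝ}

theorem differentiableOn_tsum_of_eventually_norm_le (hu : Summable u)
    (hf : ∀ i, DifferentiableOn ℂ (F i) U) (hU : IsOpen U)
    (hF : ∀ᶠ i in cofinite, ∀ w ∈ U, ‖F i w‖ ≤ u i) :
    DifferentiableOn ℂ (fun w => ∑' i, F i w) U :=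
  (tendstoUniformlyOn_tsum_of_cofinite_eventually hu hF).tendstoLocallyUniformlyOn.differentiableOn
    (Eventually.of_forall fun _ => DifferentiableOn.fun_sum fun i _ => hf i) hU

theorem hasSum_deriv_of_eventually_norm_le (hu : Summable u)
    (hf : ∀ i, DifferentiableOn ℂ (F i) U) (hU : IsOpen U)
    (hF : ∀ᶠ i in cofinite, ∀ w ∈ U, ‖F i w‖ ≤ u i) {z : ℂ} (hz : z ∈ U) :
    HasSum (fun i => deriv (F i) z) (deriv (fun w => ∑' i, F i w) z) := by
  have hc := (tendstoUniformlyOn_tsum_of_cofinite_eventually hu hF).tendstoLocallyUniformlyOn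
  rw [HasSum]
  convert! (hc.deriv (Eventually.of_forall fun _ => DifferentiableOn.fun_sum fun i _ => hf i)
    hU).tendsto_at hz using 1
  ext1 t
  exact (deriv_fun_sum fun i _ => (hf i).differentiableAt (hU.mem_nhds hz)).symm

end TsumCofinite

noncomputable def relZetaTerm (m₁ m₂ : ℝ) (ℓ : ℕ) (s : ℂ) : ℂ :=
  branchPow ((ℓ : ℝ) ^ 2 - m₂ ^ 2) s - branchPow ((ℓ : ℝ) ^ 2 - m₁ ^ 2) s

noncomputable def relZeta (m₁ m₂ : ℝ) (s : ℂ) : ℂ :=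
  ∑' ℓ : ℕ+, relZetaTerm m₁ m₂ ℓ s

lemma hasDerivAt_relZetaTerm (m₁ m₂ : ℝ) (ℓ : ℕ) (s : ℂ) :
    HasDerivAt (relZetaTerm m₁ m₂ ℓ)
      (branchPow ((ℓ : ℝ) ^ 2 - m₂ ^ 2) s * -branchLog ((ℓ : ℝ) ^ 2 - m₂ ^ 2)
        - branchPow ((ℓ : ℝ) ^ 2 - m₁ ^ 2) s * -branchLog ((ℓ : ℝ) ^ 2 - m₁ ^ 2)) s :=
  (hasDerivAt_branchPow _ s).sub (hasDerivAt_branchPow _ s)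

lemma deriv_relZetaTerm_zero (m₁ m₂ : ℝ) (ℓ : ℕ) :
    deriv (relZetaTerm m₁ m₂ ℓ) 0
      = branchLog ((ℓ : ℝ) ^ 2 - m₁ ^ 2) - branchLog ((ℓ : ℝ) ^ 2 - m₂ ^ 2) := by
  rw [(hasDerivAt_relZetaTerm m₁ m₂ ℓ 0).deriv, branchPow_zero, branchPow_zero]
  ring

lemma differentiable_relZetaTerm (m₁ m₂ : ℝ) (ℓ : ℕ) : Differentiable ℂ (relZetaTerm m₁ m₂ ℓ) :=
  fun s => (hasDerivAt_relZetaTerm m₁ m₂ ℓ s).differentiableAt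

lemma exists_summable_eventually_norm_relZetaTerm_le (m₁ m₂ : ℝ) {σ : ℝ} (hσ₀ : 0 ≤ σ)
    (hσ : σ < 1 / 2) (R : ℝ) :
    ∃ u : ℕ+ → ℝ, Summable u ∧ ∀ᶠ ℓ : ℕ+ in cofinite,
      ∀ s ∈ {s : ℂ | -σ < s.re ∧ ‖s‖ < R}, ‖relZetaTerm m₁ m₂ ℓ s‖ ≤ u ℓ := by
  refine ⟨fun ℓ => 4 * R * |m₂ ^ 2 - m₁ ^ 2| * (ℓ : ℝ) ^ (2 * σ - 2), ?_, ?_⟩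
  · exact ((Real.summable_nat_rpow.2 (by linarith)).comp_injective PNat.coe_injective).mul_left _
  · have hℓ : Tendsto (fun ℓ : ℕ+ => (ℓ : ℝ) ^ 2) cofinite atTop :=
      (tendsto_pow_atTop two_ne_zero).comp <| tendsto_natCast_atTop_atTop.comp <|
        Nat.cofinite_eq_atTop ▸ PNat.coe_injective.tendsto_cofinite
    filter_upwards [hℓ.eventually_ge_atTop (2 * m₁ ^ 2 + 2), hℓ.eventually_ge_atTop (2 * m₂ ^ 2),
      hℓ.eventually_ge_atTop (2 * R * |m₂ ^ 2 - m₁ ^ 2|)] with ℓ h₁ h₂ hR s ⟨hs, hsR⟩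
    exact norm_branchPow_sub_branchPow_le hσ₀ (by positivity) h₁ h₂ hR hs.le hsR.le

lemma isOpen_re_gt_norm_lt (σ R : ℝ) : IsOpen {s : ℂ | -σ < s.re ∧ ‖s‖ < R} :=
  (isOpen_lt continuous_const continuous_re).inter (isOpen_lt continuous_norm continuous_const)

lemma differentiableOn_relZeta (m₁ m₂ : ℝ) :
    DifferentiableOn ℂ (relZeta m₁ m₂) {s : ℂ | -(1 / 2) < s.re} := by
  intro s₀ hs₀
  obtain ⟨σ, hσ₀, hσ⟩ := exists_between (max_lt (by norm_num : (0 : ℝ) < 1 / 2)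
    (by linarith [hs₀.out] : -s₀.re < 1 / 2))
  obtain ⟨u, hu, hF⟩ := exists_summable_eventually_norm_relZetaTerm_le m₁ m₂
    (le_of_max_le_left hσ₀.le) hσ (‖s₀‖ + 1)
  have hU := isOpen_re_gt_norm_lt σ (‖s₀‖ + 1)
  have hs₀U : s₀ ∈ {s : ℂ | -σ < s.re ∧ ‖s‖ < ‖s₀‖ + 1} :=
    ⟨by linarith [le_max_right 0 (-s₀.re)], by linarith⟩
  exact ((differentiableOn_tsum_of_eventually_norm_le hu
    (fun ℓ => (differentiable_relZetaTerm m₁ m₂ ℓ).differentiableOn) hU hF).differentiableAt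
      (hU.mem_nhds hs₀U)).differentiableWithinAt

lemma hasSum_deriv_relZeta_zero (m₁ m₂ : ℝ) :
    HasSum (fun ℓ : ℕ+ => branchLog ((ℓ : ℝ) ^ 2 - m₁ ^ 2) - branchLog ((ℓ : ℝ) ^ 2 - m₂ ^ 2))
      (deriv (relZeta m₁ m₂) 0) := by
  obtain ⟨u, hu, hF⟩ := exists_summable_eventually_norm_relZetaTerm_le m₁ m₂
    (by norm_num : (0 : ℝ) ≤ 1 / 4) (by norm_num) 1
  have h := hasSum_deriv_of_eventually_norm_le hu
    (fun ℓ => (differentiable_relZetaTerm m₁ m₂ ℓ).differentiableOn)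
    (isOpen_re_gt_norm_lt _ 1) hF (z := 0) (by norm_num)
  simp only [deriv_relZetaTerm_zero] at h
  exact h

section EulerProduct

variable {m : ℝ} {n : ℕ}

lemma sin_pi_mul_ne_zero_of_mem_Ioo (hm : m ∈ Set.Ioo (n : ℝ) (n + 1)) :
    Real.sin (π * m) ≠ 0 := by
  refine Real.sin_ne_zero_iff.2 fun k hk => ?_
  have hkm : (k : ℝ) = m := mul_right_cancel₀ Real.pi_ne_zero (hk.trans (mul_comm π m))
  have h₁ : (n : ℤ) < k := by exact_mod_cast hkm ▸ hm.1
  have h₂ : k < (n : ℤ) + 1 := by exact_mod_cast hkm ▸ hm.2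
  omega

lemma succ_sq_sub_sq_pos_iff (hm : m ∈ Set.Ioo (n : ℝ) (n + 1)) (k : ℕ) :
    0 < ((k : ℝ) + 1) ^ 2 - m ^ 2 ↔ n ≤ k := by
  have hm₀ : 0 < m := (Nat.cast_nonneg n).trans_lt hm.1
  constructor
  · intro h
    by_contra hk
    have : (k : ℝ) + 1 ≤ n := by exact_mod_cast Nat.lt_iff_add_one_le.1 (not_le.1 hk)
    nlinarith [hm.1]
  · intro hk
    have : (n : ℝ) ≤ k := by exact_mod_cast hk
    nlinarith [hm.2]

lemma succ_sq_sub_sq_ne_zero (hm : m ∈ Set.Ioo (n : ℝ) (n + 1)) (k : ℕ) :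
    ((k : ℝ) + 1) ^ 2 - m ^ 2 ≠ 0 := by
  intro h
  rcases le_or_gt n k with hk | hk
  · exact h.not_gt ((succ_sq_sub_sq_pos_iff hm k).2 hk)
  · have hm₀ : 0 < m := (Nat.cast_nonneg n).trans_lt hm.1
    have : (k : ℝ) + 1 ≤ n := by exact_mod_cast hk
    nlinarith [hm.1]

lemma succ_sq_sub_sq_eq_mul (m : ℝ) (k : ℕ) :
    ((k : ℝ) + 1) ^ 2 - m ^ 2 = ((k : ℝ) + 1) ^ 2 * (1 - m ^ 2 / ((k : ℝ) + 1) ^ 2) := by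
  field_simp

lemma one_sub_sq_div_succ_sq_ne_zero (hm : m ∈ Set.Ioo (n : ℝ) (n + 1)) (k : ℕ) :
    1 - m ^ 2 / ((k : ℝ) + 1) ^ 2 ≠ 0 :=
  right_ne_zero_of_mul (succ_sq_sub_sq_eq_mul m k ▸ succ_sq_sub_sq_ne_zero hm k)

lemma branchLog_succ_sq_sub_sq (hm : m ∈ Set.Ioo (n : ℝ) (n + 1)) (k : ℕ) :
    branchLog (((k : ℝ) + 1) ^ 2 - m ^ 2) = Real.log (((k : ℝ) + 1) ^ 2)
      + Real.log (1 - m ^ 2 / ((k : ℝ) + 1) ^ 2) - if k < n then π * I else 0 := by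
  rw [branchLog, Real.log_abs, succ_sq_sub_sq_eq_mul m k,
    Real.log_mul (by positivity) (one_sub_sq_div_succ_sq_ne_zero hm k), ← succ_sq_sub_sq_eq_mul]
  simp only [succ_sq_sub_sq_pos_iff hm k, ← not_lt, ite_not]
  push_cast
  ring

lemma tendsto_sum_branchLog_sub_log (hm : m ∈ Set.Ioo (n : ℝ) (n + 1)) :
    Tendsto (fun N => ∑ k ∈ range N,
        (branchLog (((k : ℝ) + 1) ^ 2 - m ^ 2) - Real.log (((k : ℝ) + 1) ^ 2)))
      atTop (𝓝 (Real.log (Real.sin (π * m) / (π * m)) - n * (π * I))) := by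
  have hπm : π * m ≠ 0 := mul_ne_zero Real.pi_ne_zero ((Nat.cast_nonneg n).trans_lt hm.1).ne'
  have hprod : Tendsto (fun N => ∏ k ∈ range N, (1 - m ^ 2 / ((k : ℝ) + 1) ^ 2)) atTop
      (𝓝 (Real.sin (π * m) / (π * m))) := by
    refine ((Real.tendsto_euler_sin_prod m).div_const (π * m)).congr fun N => ?_
    rw [mul_div_cancel_left₀ _ hπm]
  have hlog : Tendsto (fun N => ∑ k ∈ range N, Real.log (1 - m ^ 2 / ((k : ℝ) + 1) ^ 2)) atTop
      (𝓝 (Real.log (Real.sin (π * m) / (π * m)))) := by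
    have hsin := sin_pi_mul_ne_zero_of_mem_Ioo hm
    refine ((Real.continuousAt_log (div_ne_zero hsin hπm)).tendsto.comp hprod).congr fun N => ?_
    exact Real.log_prod fun k _ => one_sub_sq_div_succ_sq_ne_zero hm k
  have hite : HasSum (fun k : ℕ => if k < n then π * I else 0)
      (∑ k ∈ range n, if k < n then π * I else 0) :=
    hasSum_sum_of_ne_finset_zero fun k hk => if_neg (by simpa using hk)
  rw [sum_ite_of_true fun k hk => mem_range.1 hk, sum_const, card_range, nsmul_eq_mul] at hite
  refine ((continuous_ofReal.tendsto _).comp hlog |>.sub hite.tendsto_sum_nat).congr fun N => ?_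
  simp only [Function.comp_apply, branchLog_succ_sq_sub_sq hm, ofReal_sum, ← sum_sub_distrib]
  ring_nf

end EulerProduct

lemma deriv_relZeta_zero {m₁ m₂ : ℝ} {n₁ n₂ : ℕ} (hm₁ : m₁ ∈ Set.Ioo (n₁ : ℝ) (n₁ + 1))
    (hm₂ : m₂ ∈ Set.Ioo (n₂ : ℝ) (n₂ + 1)) :
    deriv (relZeta m₁ m₂) 0 = (Real.log (Real.sin (π * m₁) / (π * m₁)) - n₁ * (π * I))
      - (Real.log (Real.sin (π * m₂) / (π * m₂)) - n₂ * (π * I)) := by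
  have h := hasSum_pnat_iff_hasSum_succ
    (f := fun ℓ : ℕ => branchLog ((ℓ : ℝ) ^ 2 - m₁ ^ 2) - branchLog ((ℓ : ℝ) ^ 2 - m₂ ^ 2)) |>.1
      (hasSum_deriv_relZeta_zero m₁ m₂)
  refine tendsto_nhds_unique h.tendsto_sum_nat <|
    ((tendsto_sum_branchLog_sub_log hm₁).sub (tendsto_sum_branchLog_sub_log hm₂)).congr fun N => ?_
  rw [← sum_sub_distrib]
  refine sum_congr rfl fun k _ => ?_
  push_cast
  ring

lemma log_abs_sin_mul_div_eq {m₁ m₂ : ℝ} (h₁ : Real.sin (π * m₁) ≠ 0)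
    (h₂ : Real.sin (π * m₂) ≠ 0) :
    Real.log |Real.sin (π * m₁) * m₂ / (Real.sin (π * m₂) * m₁)|
      = Real.log (Real.sin (π * m₁) / (π * m₁)) - Real.log (Real.sin (π * m₂) / (π * m₂)) := by
  have hm₁ : m₁ ≠ 0 := by rintro rfl; simp at h₁
  have hm₂ : m₂ ≠ 0 := by rintro rfl; simp at h₂
  rw [Real.log_abs,
    ← Real.log_div (div_ne_zero h₁ (by positivity)) (div_ne_zero h₂ (by positivity))]
  congr 1
  field_simp

theorem statement16_general (n₁ n₂ : ℕ) (m₁ m₂ : ℝ)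
    (hm₁ : m₁ ∈ Set.Ioo (n₁ : ℝ) (n₁ + 1)) (hm₂ : m₂ ∈ Set.Ioo (n₂ : ℝ) (n₂ + 1)) :
    ∃ Z : ℂ → ℂ,
      DifferentiableOn ℂ Z {s : ℂ | -(1 / 2) < s.re ∧ s.re < 1 ∧ s ≠ 1 / 2} ∧
      (∀ s : ℂ, 1 / 2 < s.re → s.re < 1 →
        Z s = ∑' ℓ : ℕ+,
          (branchPow ((ℓ : ℝ) ^ 2 - m₂ ^ 2) s - branchPow ((ℓ : ℝ) ^ 2 - m₁ ^ 2) s)) ∧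
      deriv Z 0 = Real.pi * ((n₂ : ℂ) - (n₁ : ℂ)) * Complex.I
        + (Real.log |Real.sin (Real.pi * m₁) * m₂ / (Real.sin (Real.pi * m₂) * m₁)| : ℂ) := by
  refine ⟨relZeta m₁ m₂, (differentiableOn_relZeta m₁ m₂).mono fun s hs => hs.1,
    fun _ _ _ => rfl, ?_⟩
  rw [deriv_relZeta_zero hm₁ hm₂, log_abs_sin_mul_div_eq (sin_pi_mul_ne_zero_of_mem_Ioo hm₁)
    (sin_pi_mul_ne_zero_of_mem_Ioo hm₂)]
  push_cast
  ring

theorem statement16 (n₁ n₂ : ℕ) (hn₁ : 1 ≤ n₁) (hn₂ : 1 ≤ n₂) (m₁ m₂ : ℝ)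
    (hm₁ : m₁ ∈ Set.Ioo (n₁ : ℝ) (n₁ + 1)) (hm₂ : m₂ ∈ Set.Ioo (n₂ : ℝ) (n₂ + 1)) :
    ∃ Z : ℂ → ℂ,
      DifferentiableOn ℂ Z {s : ℂ | -(1 / 2) < s.re ∧ s.re < 1 ∧ s ≠ 1 / 2} ∧
      (∀ s : ℂ, 1 / 2 < s.re → s.re < 1 →
        Z s = ∑' ℓ : ℕ+,
          (branchPow ((ℓ : ℝ) ^ 2 - m₂ ^ 2) s - branchPow ((ℓ : ℝ) ^ 2 - m₁ ^ 2) s)) ∧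
      deriv Z 0 = Real.pi * ((n₂ : ℂ) - (n₁ : ℂ)) * Complex.I
        + (Real.log |Real.sin (Real.pi * m₁) * m₂ / (Real.sin (Real.pi * m₂) * m₁)| : ℂ) :=
  statement16_general n₁ n₂ m₁ m₂ hm₁ hm₂
end
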